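/- arXiv:1105.1943 — 3 statements merged into one kernel-verified Lean document; each statement's English description precedes it below -/
import Mathlib

section
/- For any parameters S, N, K ∈ ℕ with S, N, K ≥ 1 and ρ > 0, there is exactly one real root x̄ of the cubic p(x) = x³ − x²(2 − S/N − 1/K) + x(1 − S/N − 1/K + S/(NK)·(1+ρ)) − (S/(NK))·ρ satisfying both 0 < x̄ < 1 and x̄ > 1 − S/N. -/
/-! With `s = S/N` and `k = 1/K` the cubic factors as
`p(x) = x (x + s - 1) (x + k - 1) - s k ρ (1 - x)`. On the admissible interval
`max 0 (1 - s) < x < 1` the product `x (x + s - 1)` is positive, so `p(x) = 0` iff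
`x + k - 1 = s k ρ δ(x)` with `δ(x) = (1 - x) / (x (x + s - 1))`. The left side increases and
`δ` decreases, so there is at most one root; `p` is negative at `max 0 (1 - s)` and equals
`s k > 0` at `1`, so the intermediate value theorem provides one. -/

open Set

namespace RayleighCubic

def cubic (s k ρ x : ℝ) : ℝ :=
  x ^ 3 - x ^ 2 * (2 - s - k) + x * (1 - s - k + s * k * (1 + ρ)) - s * k * ρ

noncomputable def delta (s x : ℝ) : ℝ := (1 - x) / (x * (x + s - 1))

theorem cubic_eq (s k ρ x : ℝ) :
    cubic s k ρ x = x * (x + s - 1) * (x + k - 1) - s * k * ρ * (1 - x) := by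
  unfold cubic; ring

theorem continuous_cubic (s k ρ : ℝ) : Continuous (cubic s k ρ) := by
  unfold cubic; fun_prop

theorem mul_pos_of_mem_Ioo {s x : ℝ} (hx : x ∈ Ioo (max 0 (1 - s)) 1) :
    0 < x * (x + s - 1) := by
  obtain ⟨hx0, hxs⟩ := max_lt_iff.1 hx.1
  exact mul_pos hx0 (by linarith)

theorem strictAntiOn_delta (s : ℝ) : StrictAntiOn (delta s) (Ioo (max 0 (1 - s)) 1) := by
  intro a ha b hb hab
  obtain ⟨-, has⟩ := max_lt_iff.1 ha.1
  obtain ⟨hb0, -⟩ := max_lt_iff.1 hb.1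
  have hden : a * (a + s - 1) ≤ b * (b + s - 1) :=
    mul_le_mul hab.le (by linarith) (by linarith) hb0.le
  exact div_lt_div₀ (by linarith) hden (by linarith [hb.2]) (mul_pos_of_mem_Ioo ha)

theorem cubic_eq_zero_iff {s k ρ x : ℝ} (hx : x ∈ Ioo (max 0 (1 - s)) 1) :
    cubic s k ρ x = 0 ↔ x + k - 1 - s * k * ρ * delta s x = 0 := by
  have hpos := mul_pos_of_mem_Ioo hx
  have h : x + k - 1 - s * k * ρ * delta s x = cubic s k ρ x / (x * (x + s - 1)) := by
    rw [cubic_eq, delta, eq_div_iff hpos.ne', sub_mul, mul_assoc (s * k * ρ),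
      div_mul_cancel₀ _ hpos.ne']
    ring
  rw [h, div_eq_zero_iff, or_iff_left hpos.ne']

theorem strictMonoOn_sub_delta {s c : ℝ} (k : ℝ) (hc : 0 ≤ c) :
    StrictMonoOn (fun x => x + k - 1 - c * delta s x) (Ioo (max 0 (1 - s)) 1) := by
  intro a ha b hb hab
  have hδ : c * delta s b ≤ c * delta s a :=
    mul_le_mul_of_nonneg_left (strictAntiOn_delta s ha hb hab).le hc
  dsimp only
  linarith

theorem exists_cubic_eq_zero {s k ρ : ℝ} (hs : 0 < s) (hk : 0 < k) (hρ : 0 < ρ) :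
    ∃ x ∈ Ioo (max 0 (1 - s)) 1, cubic s k ρ x = 0 := by
  set a := max 0 (1 - s)
  have ha1 : a < 1 := max_lt one_pos (by linarith)
  have ha : a * (a + s - 1) = 0 := by
    rcases max_choice 0 (1 - s) with h | h <;> simp only [a, h] <;> ring
  have hfa : cubic s k ρ a < 0 := by
    rw [cubic_eq, ha, zero_mul, zero_sub, neg_lt_zero]
    exact mul_pos (by positivity) (by linarith)
  have hf1 : 0 < cubic s k ρ 1 := by
    rw [show cubic s k ρ 1 = s * k by rw [cubic_eq]; ring]
    positivity
  exact intermediate_value_Ioo ha1.le (continuous_cubic s k ρ).continuousOn ⟨hfa, hf1⟩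

theorem existsUnique_cubic_eq_zero {s k ρ : ℝ} (hs : 0 < s) (hk : 0 < k) (hρ : 0 < ρ) :
    ∃! x, x ∈ Ioo (max 0 (1 - s)) 1 ∧ cubic s k ρ x = 0 := by
  obtain ⟨x, hx, hroot⟩ := exists_cubic_eq_zero hs hk hρ
  refine ⟨x, ⟨hx, hroot⟩, fun y ⟨hy, hyroot⟩ => ?_⟩
  refine (strictMonoOn_sub_delta k (by positivity : 0 ≤ s * k * ρ)).injOn hy hx ?_
  rw [(cubic_eq_zero_iff hy).1 hyroot, (cubic_eq_zero_iff hx).1 hroot]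

end RayleighCubic

open RayleighCubic in
/-- The cubic fixed-point equation of the Rayleigh product channel has exactly
one real root in (0,1) that also satisfies x̄ > 1 - S/N. -/
theorem cubic_unique_admissible_root
    (S N K : ℕ) (hS : 1 ≤ S) (hN : 1 ≤ N) (hK : 1 ≤ K)
    (ρ : ℝ) (hρ : 0 < ρ) :
    ∃! x : ℝ, (0 < x ∧ x < 1 ∧ 1 - (S : ℝ) / N < x) ∧
      x ^ 3 - x ^ 2 * (2 - (S : ℝ) / N - 1 / K)
        + x * (1 - (S : ℝ) / N - 1 / K + (S : ℝ) / (N * K) * (1 + ρ))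
        - (S : ℝ) / (N * K) * ρ = 0 := by
  have hs : 0 < (S : ℝ) / N := div_pos (by exact_mod_cast hS) (by exact_mod_cast hN)
  have hk : 0 < 1 / (K : ℝ) := one_div_pos.2 (by exact_mod_cast hK)
  have hsk : (S : ℝ) / (N * K) = S / N * (1 / K) := by rw [div_mul_div_comm, mul_one]
  rw [hsk]
  convert existsUnique_cubic_eq_zero hs hk hρ using 3 with x
  · rw [mem_Ioo, max_lt_iff]
    tauto
  · rfl
end

section
/- Fix constants a, c > 0 and ρ > 0, and consider the scalar fixed-point system in (ḡ, g, δ) ∈ (0,∞)³: ḡ = a/(1 + g·a), g = c·δ/(1 + ḡ·δ), δ = 1/( ḡ·g/δ · b + ρ ) for a fixed b > 0. This system has at most one solution with ḡ, g, δ > 0. -/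
/-!
With `p = ḡ g`, the three equations read `ḡ = a (1 - p)`, `g = δ (c - p)` and `b p + ρ δ = 1`.
A larger `p` forces a smaller `ḡ` and `δ`, hence a larger `g = p / ḡ` by the first equation but a
smaller `g = δ (c - p)` by the second; so `p` is the same for any two solutions, and `p`
determines `ḡ`, `δ` and `g`.
-/

/-- The system with denominators cleared, in the variables `u, v, w` for `ḡ, g, δ`. -/
structure ClearedSolution (a b c ρ u v w : ℝ) : Prop where
  u_pos : 0 < u
  v_pos : 0 < v
  w_pos : 0 < w
  u_eq : u = a * (1 - u * v)
  v_eq : v = w * (c - u * v)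
  w_eq : b * (u * v) + ρ * w = 1

namespace ClearedSolution

variable {a b c ρ u v w u' v' w' : ℝ}

theorem of_eq_div (hu : 0 < u) (hv : 0 < v) (hw : 0 < w)
    (hu_eq : u = a / (1 + v * a)) (hv_eq : v = c * w / (1 + u * w))
    (hw_eq : w = 1 / (u * v / w * b + ρ)) : ClearedSolution a b c ρ u v w := by
  have hua : 1 + v * a ≠ 0 := fun h => hu.ne' (by rw [hu_eq, h, div_zero])
  have huw : 1 + u * w ≠ 0 := by positivity
  have hwρ : u * v / w * b + ρ ≠ 0 := fun h => hw.ne' (by rw [hw_eq, h, div_zero])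
  refine ⟨hu, hv, hw, ?_, ?_, ?_⟩
  · rw [eq_div_iff hua] at hu_eq
    linear_combination hu_eq
  · rw [eq_div_iff huw] at hv_eq
    linear_combination hv_eq
  · rw [eq_div_iff hwρ] at hw_eq
    rw [← hw_eq]
    field_simp

theorem v_eq_div (h : ClearedSolution a b c ρ u v w) : v = u * v / u :=
  (mul_div_cancel_left₀ v h.u_pos.ne').symm

theorem not_mul_lt (ha : 0 < a) (hb : 0 < b) (hρ : 0 < ρ)
    (h : ClearedSolution a b c ρ u v w) (h' : ClearedSolution a b c ρ u' v' w') :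
    ¬ u * v < u' * v' := by
  intro hp
  have hw : w' < w := by nlinarith [h.w_eq, h'.w_eq]
  have hu : u' < u := by nlinarith [h.u_eq, h'.u_eq]
  have hv_lt : v < v' := by
    rw [h.v_eq_div, h'.v_eq_div]
    exact div_lt_div₀ hp hu.le (mul_pos h'.u_pos h'.v_pos).le h'.u_pos
  have hc' : 0 < c - u' * v' := pos_of_mul_pos_right (h'.v_eq ▸ h'.v_pos) h'.w_pos.le
  have hv_gt : v' < v := by
    rw [h.v_eq, h'.v_eq]
    exact mul_lt_mul hw (by linarith) hc' h.w_pos.le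
  exact hv_lt.not_gt hv_gt

theorem mul_eq (ha : 0 < a) (hb : 0 < b) (hρ : 0 < ρ)
    (h : ClearedSolution a b c ρ u v w) (h' : ClearedSolution a b c ρ u' v' w') :
    u * v = u' * v' :=
  le_antisymm (not_lt.mp (not_mul_lt ha hb hρ h' h)) (not_lt.mp (not_mul_lt ha hb hρ h h'))

theorem eq_of_mul_eq (hρ : 0 < ρ)
    (h : ClearedSolution a b c ρ u v w) (h' : ClearedSolution a b c ρ u' v' w')
    (hp : u * v = u' * v') : u = u' ∧ v = v' ∧ w = w' := by
  have hu : u = u' := by rw [h.u_eq, h'.u_eq, hp]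
  have hw : w = w' := by
    have := h.w_eq.trans h'.w_eq.symm
    rw [hp] at this
    exact mul_left_cancel₀ hρ.ne' (add_left_cancel this)
  refine ⟨hu, ?_, hw⟩
  rw [h.v_eq_div, h'.v_eq_div, hp, hu]

end ClearedSolution

theorem scalar_system_at_most_one_solution_general
    (a b c ρ : ℝ) (ha : 0 < a) (hb : 0 < b) (hρ : 0 < ρ)
    (x y : ℝ × ℝ × ℝ)
    (hx : 0 < x.1 ∧ 0 < x.2.1 ∧ 0 < x.2.2 ∧
      x.1 = a / (1 + x.2.1 * a) ∧
      x.2.1 = c * x.2.2 / (1 + x.1 * x.2.2) ∧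
      x.2.2 = 1 / (x.1 * x.2.1 / x.2.2 * b + ρ))
    (hy : 0 < y.1 ∧ 0 < y.2.1 ∧ 0 < y.2.2 ∧
      y.1 = a / (1 + y.2.1 * a) ∧
      y.2.1 = c * y.2.2 / (1 + y.1 * y.2.2) ∧
      y.2.2 = 1 / (y.1 * y.2.1 / y.2.2 * b + ρ)) :
    x = y := by
  obtain ⟨hu, hv, hw, hu_eq, hv_eq, hw_eq⟩ := hx
  obtain ⟨hu', hv', hw', hu_eq', hv_eq', hw_eq'⟩ := hy
  have hx := ClearedSolution.of_eq_div hu hv hw hu_eq hv_eq hw_eq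
  have hy := ClearedSolution.of_eq_div hu' hv' hw' hu_eq' hv_eq' hw_eq'
  obtain ⟨h₁, h₂, h₃⟩ := hx.eq_of_mul_eq hρ hy (hx.mul_eq ha hb hρ hy)
  exact Prod.ext h₁ (Prod.ext h₂ h₃)

/-- The scalar fixed-point system ḡ = a/(1+ga), g = cδ/(1+ḡδ), δ = 1/(ḡg b/δ + ρ)
has at most one positive solution. -/
theorem scalar_system_at_most_one_solution
    (a b c ρ : ℝ) (ha : 0 < a) (hb : 0 < b) (hc : 0 < c) (hρ : 0 < ρ)
    (x y : ℝ × ℝ × ℝ)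
    (hx : 0 < x.1 ∧ 0 < x.2.1 ∧ 0 < x.2.2 ∧
      x.1 = a / (1 + x.2.1 * a) ∧
      x.2.1 = c * x.2.2 / (1 + x.1 * x.2.2) ∧
      x.2.2 = 1 / (x.1 * x.2.1 / x.2.2 * b + ρ))
    (hy : 0 < y.1 ∧ 0 < y.2.1 ∧ 0 < y.2.2 ∧
      y.1 = a / (1 + y.2.1 * a) ∧
      y.2.1 = c * y.2.2 / (1 + y.1 * y.2.2) ∧
      y.2.2 = 1 / (y.1 * y.2.1 / y.2.2 * b + ρ)) :
    x = y :=
  scalar_system_at_most_one_solution_general a b c ρ ha hb hρ x y hx hy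
end

section
/- Let K = 1, N = n = 1, S = 1, so all matrices are scalars: T = t > 0, Q = q > 0, s₁ = s > 0, R = r > 0, ρ > 0. Then the fundamental system ḡ = tq/(1 + g·tq), g = s·δ/(1 + ḡ·s·δ), δ = r/( ḡ·g/δ · r + ρ ) has a unique solution with ḡ, g, δ > 0, and this solution depends continuously on ρ ∈ (0,∞). -/
/-!
Writing `u = 1 - ḡ g`, the three equations say `ḡ = t q u`, `δ = r u / ρ` and `g = s δ u`, so
`u` solves the cubic `t q s r u³ = ρ (1 - u)`. Its left side minus its right side is strictly
increasing in `u`, so the cubic has exactly one root in `(0, 1)`; that root is monotone in `ρ`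
and takes every value in `(0, 1)`, so it is continuous in `ρ`, and so is the solution.
-/

open Set

def IsCubicRoot (c ρ u : ℝ) : Prop :=
  u ∈ Ioo 0 1 ∧ c * u ^ 3 = ρ * (1 - u)

section CubicRoot

variable {c ρ : ℝ}

lemma strictMono_cubic_add (hc : 0 < c) (hρ : 0 ≤ ρ) :
    StrictMono fun u : ℝ => c * u ^ 3 + ρ * u :=
  ((Odd.strictMono_pow (by decide)).const_mul hc).add_monotone fun _ _ h =>
    mul_le_mul_of_nonneg_left h hρ

lemma existsUnique_isCubicRoot (hc : 0 < c) (hρ : 0 < ρ) : ∃! u, IsCubicRoot c ρ u := by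
  have hcont : ContinuousOn (fun u : ℝ => c * u ^ 3 + ρ * u) (Icc 0 1) := by fun_prop
  obtain ⟨u, hu, hu_eq⟩ := intermediate_value_Ioo zero_le_one hcont
    (show ρ ∈ Ioo _ _ by simp [hρ, hc])
  beta_reduce at hu_eq
  refine ⟨u, ⟨hu, by linarith⟩, fun v ⟨_, hv_eq⟩ => (strictMono_cubic_add hc hρ.le).injective ?_⟩
  show c * v ^ 3 + ρ * v = c * u ^ 3 + ρ * u
  linarith

lemma IsCubicRoot.le_of_le {ρ₁ ρ₂ u₁ u₂ : ℝ} (hc : 0 < c) (h₁ : IsCubicRoot c ρ₁ u₁)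
    (h₂ : IsCubicRoot c ρ₂ u₂) (hρ : ρ₁ ≤ ρ₂) : u₁ ≤ u₂ := by
  obtain ⟨⟨-, hu₁⟩, h₁⟩ := h₁
  obtain ⟨⟨hu₂, hu₂'⟩, h₂⟩ := h₂
  have hρ₂ : 0 < ρ₂ := pos_of_mul_pos_left (h₂ ▸ by positivity) (sub_pos.2 hu₂').le
  by_contra! hlt
  exact lt_irrefl (c * u₂ ^ 3) <| calc
    _ < c * u₁ ^ 3 := by gcongr
    _ = ρ₁ * (1 - u₁) := h₁
    _ ≤ ρ₂ * (1 - u₁) := by gcongr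
    _ ≤ ρ₂ * (1 - u₂) := by gcongr
    _ = c * u₂ ^ 3 := h₂.symm

lemma continuousOn_of_isCubicRoot (hc : 0 < c) {U : ℝ → ℝ}
    (hU : ∀ ρ ∈ Ioi 0, IsCubicRoot c ρ (U ρ)) : ContinuousOn U (Ioi 0) := by
  have hmono : MonotoneOn U (Ioi 0) := fun ρ₁ hρ₁ ρ₂ hρ₂ hρ =>
    (hU ρ₁ hρ₁).le_of_le hc (hU ρ₂ hρ₂) hρ
  have himage : Ioo 0 1 ⊆ U '' Ioi 0 := by
    rintro u ⟨hu₀, hu₁⟩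
    have hρ : 0 < c * u ^ 3 / (1 - u) := by have := sub_pos.2 hu₁; positivity
    have hroot : IsCubicRoot c (c * u ^ 3 / (1 - u)) u :=
      ⟨⟨hu₀, hu₁⟩, by field_simp [(sub_pos.2 hu₁).ne']⟩
    exact ⟨_, hρ, (existsUnique_isCubicRoot hc hρ).unique (hU _ hρ) hroot⟩
  intro ρ hρ
  obtain ⟨⟨hu₀, hu₁⟩, _⟩ := hU ρ hρ
  exact (continuousAt_of_monotoneOn_of_image_mem_nhds hmono (Ioi_mem_nhds hρ)
    (Filter.mem_of_superset (Ioo_mem_nhds hu₀ hu₁) himage)).continuousWithinAt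

end CubicRoot

section System

variable {t q s r ρ : ℝ}

def ScalarFundamentalSystem (t q s r ρ : ℝ) (v : ℝ × ℝ × ℝ) : Prop :=
  0 < v.1 ∧ 0 < v.2.1 ∧ 0 < v.2.2 ∧
  v.1 = t * q / (1 + v.2.1 * (t * q)) ∧
  v.2.1 = s * v.2.2 / (1 + v.1 * s * v.2.2) ∧
  v.2.2 = r / (v.1 * v.2.1 / v.2.2 * r + ρ)

/-- The solution `(ḡ, g, δ)` expressed through `u = 1 - ḡ g`. -/
noncomputable def systemSolution (t q s r ρ u : ℝ) : ℝ × ℝ × ℝ :=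
  (t * q * u, s * r * u ^ 2 / ρ, r * u / ρ)

lemma ScalarFundamentalSystem.isCubicRoot_and_eq {v : ℝ × ℝ × ℝ} (ht : 0 < t) (hq : 0 < q)
    (hs : 0 < s) (hr : 0 < r) (hρ : 0 < ρ) (hv : ScalarFundamentalSystem t q s r ρ v) :
    IsCubicRoot (t * q * s * r) ρ (1 - v.1 * v.2.1) ∧
      v = systemSolution t q s r ρ (1 - v.1 * v.2.1) := by
  obtain ⟨a, b, d⟩ := v
  obtain ⟨ha, hb, hd, e₁, e₂, e₃⟩ := hv
  dsimp only at *
  rw [eq_div_iff (by positivity)] at e₁ e₂ e₃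
  have hd_eq : ρ * d = r * (1 - a * b) := by
    field_simp at e₃
    linarith
  have ha_eq : a = t * q * (1 - a * b) := by linear_combination e₁
  have hb_eq : b = s * d * (1 - a * b) := by linear_combination e₂
  have hab : a * b < 1 := by nlinarith [mul_pos hρ hd]
  refine ⟨⟨⟨by linarith, by linarith [mul_pos ha hb]⟩, ?_⟩, ?_⟩
  · linear_combination (-(ρ * b)) * ha_eq - ρ * t * q * (1 - a * b) * hb_eq
      - t * q * s * (1 - a * b) ^ 2 * hd_eq
  · simp only [systemSolution, Prod.mk.injEq]
    refine ⟨ha_eq, ?_, ?_⟩ <;> field_simp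
    · linear_combination ρ * hb_eq + s * (1 - a * b) * hd_eq
    · linear_combination hd_eq

lemma IsCubicRoot.scalarFundamentalSystem {u : ℝ} (ht : 0 < t) (hq : 0 < q) (hs : 0 < s)
    (hr : 0 < r) (hρ : 0 < ρ) (hu : IsCubicRoot (t * q * s * r) ρ u) :
    ScalarFundamentalSystem t q s r ρ (systemSolution t q s r ρ u) := by
  obtain ⟨⟨hu₀, _⟩, hu_eq⟩ := hu
  unfold systemSolution
  refine ⟨by positivity, by positivity, by positivity, ?_, ?_, ?_⟩ <;>
    rw [eq_div_iff (by positivity)] <;> field_simp <;> linear_combination hu_eq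

lemma continuousOn_systemSolution {U : ℝ → ℝ} (hU : ContinuousOn U (Ioi 0)) :
    ContinuousOn (fun ρ => systemSolution t q s r ρ (U ρ)) (Ioi 0) := by
  have hρ : ∀ ρ ∈ Ioi (0 : ℝ), ρ ≠ 0 := fun ρ hρ => ne_of_gt hρ
  unfold systemSolution
  fun_prop (disch := assumption)

end System

/-- Fully scalar case of Theorem 1: the system
ḡ = tq/(1 + g tq), g = sδ/(1 + ḡ s δ), δ = r/(ḡ g r/δ + ρ)
has a unique positive solution, which depends continuously on ρ > 0. -/
theorem scalar_fundamental_system_exists_unique_continuous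
    (t q s r : ℝ) (ht : 0 < t) (hq : 0 < q) (hs : 0 < s) (hr : 0 < r) :
    let sys : ℝ → ℝ × ℝ × ℝ → Prop := fun ρ v =>
      0 < v.1 ∧ 0 < v.2.1 ∧ 0 < v.2.2 ∧
      v.1 = t * q / (1 + v.2.1 * (t * q)) ∧
      v.2.1 = s * v.2.2 / (1 + v.1 * s * v.2.2) ∧
      v.2.2 = r / (v.1 * v.2.1 / v.2.2 * r + ρ)
    (∀ ρ : ℝ, 0 < ρ → ∃! v : ℝ × ℝ × ℝ, sys ρ v) ∧
    (∀ f : ℝ → ℝ × ℝ × ℝ, (∀ ρ : ℝ, 0 < ρ → sys ρ (f ρ)) →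
      ContinuousOn f (Set.Ioi 0)) := by
  intro sys
  have hc : 0 < t * q * s * r := by positivity
  have reduce {ρ : ℝ} (hρ : 0 < ρ) {v : ℝ × ℝ × ℝ} (hv : sys ρ v) :=
    ScalarFundamentalSystem.isCubicRoot_and_eq ht hq hs hr hρ hv
  refine ⟨fun ρ hρ => ?_, fun f hf => ?_⟩
  · obtain ⟨u, hu, hu_unique⟩ := existsUnique_isCubicRoot hc hρ
    refine ⟨_, hu.scalarFundamentalSystem ht hq hs hr hρ, fun v hv => ?_⟩
    obtain ⟨hv_root, hv_eq⟩ := reduce hρ hv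
    rw [hv_eq, hu_unique _ hv_root]
  · have hU := continuousOn_of_isCubicRoot hc fun ρ hρ => (reduce hρ (hf ρ hρ)).1
    exact (continuousOn_systemSolution hU).congr fun ρ hρ => (reduce hρ (hf ρ hρ)).2
end
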